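/- The expected value of the coordinate d_1 with respect to the uniform measure on the 3-dimensional polytope P_6(1) = {(d_1,d_2,d_3) ∈ ℝ³ : 0 ≤ d_1 ≤ 2, 0 ≤ d_3 ≤ 2, |d_1−d_2| ≤ 1 ≤ d_1+d_2, |d_2−d_3| ≤ 1 ≤ d_2+d_3} equals 7/6, and the expected value of d_2 equals 5/4. -/

import Mathlib

/-!
Fixing `d₂ = t`, the constraints on `d₁` and `d₃` decouple: each ranges independently over
`[|t - 1|, min (t + 1) 2]`, an interval of length `2t` for `t ≤ 1` and `3 - t` for `t ≥ 1`, and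
empty unless `0 ≤ t ≤ 3`. By Fubini every integral over `P_6(1)` of a function of `(d₂, d₁)`
becomes a piecewise polynomial integral in `t` over `[0, 1]` and `[1, 3]`: the volume is `4`,
`∫ d₁ = 14/3` and `∫ d₂ = 5`.
-/

open MeasureTheory

/-- The fan triangulation moment polytope for equilateral hexagons:
`P_6(1) = {(d₁,d₂,d₃) : 0 ≤ d₁ ≤ 2, 0 ≤ d₃ ≤ 2, |d₁−d₂| ≤ 1 ≤ d₁+d₂,
|d₂−d₃| ≤ 1 ≤ d₂+d₃}`. -/
def hexagonPolytope : Set (Fin 3 → ℝ) :=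
  {d | 0 ≤ d 0 ∧ d 0 ≤ 2 ∧ 0 ≤ d 2 ∧ d 2 ≤ 2 ∧
    |d 0 - d 1| ≤ 1 ∧ 1 ≤ d 0 + d 1 ∧ |d 1 - d 2| ≤ 1 ∧ 1 ≤ d 1 + d 2}

open Set

namespace MeasureTheory

variable {α β E : Type*} [MeasurableSpace α] [MeasurableSpace β] {μ : Measure α}
  {ν : Measure β} [NormedAddCommGroup E] [NormedSpace ℝ E]
  {s : Set (α × β)} {f : α × β → E}

lemma setIntegral_slice_eq_integral_indicator (hs : MeasurableSet s) (x : α) :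
    ∫ y in Prod.mk x ⁻¹' s, f (x, y) ∂ν = ∫ y, s.indicator f (x, y) ∂ν := by
  rw [← integral_indicator (measurable_prodMk_left hs)]
  rfl

lemma integrable_setIntegral_slice [SFinite ν] (hs : MeasurableSet s)
    (hf : IntegrableOn f s (μ.prod ν)) :
    Integrable (fun x => ∫ y in Prod.mk x ⁻¹' s, f (x, y) ∂ν) μ := by
  simpa only [setIntegral_slice_eq_integral_indicator hs] using
    (hf.integrable_indicator hs).integral_prod_left

lemma setIntegral_prod_eq_integral_setIntegral_slice [SFinite μ] [SFinite ν]
    (hs : MeasurableSet s) (hf : IntegrableOn f s (μ.prod ν)) :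
    ∫ z in s, f z ∂μ.prod ν = ∫ x, ∫ y in Prod.mk x ⁻¹' s, f (x, y) ∂ν ∂μ := by
  simp only [setIntegral_slice_eq_integral_indicator hs]
  rw [← integral_indicator hs, integral_prod _ (hf.integrable_indicator hs)]

end MeasureTheory

lemma integral_eq_cubic {f : ℝ → ℝ} {a b c d : ℝ}
    (hf : ∀ t, f t = a + b * t + c * t ^ 2 + d * t ^ 3) (u v : ℝ) :
    ∫ t in u..v, f t =
      a * (v - u) + b * (v ^ 2 - u ^ 2) / 2 + c * (v ^ 3 - u ^ 3) / 3 +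
        d * (v ^ 4 - u ^ 4) / 4 := by
  have hF (t : ℝ) :
      HasDerivAt (fun t => a * t + b * t ^ 2 / 2 + c * t ^ 3 / 3 + d * t ^ 4 / 4) (f t) t := by
    refine ((((hasDerivAt_id' t).const_mul a).fun_add
      (((hasDerivAt_pow 2 t).const_mul b).div_const 2)).fun_add
      (((hasDerivAt_pow 3 t).const_mul c).div_const 3)).fun_add
      (((hasDerivAt_pow 4 t).const_mul d).div_const 4) |>.congr_deriv ?_
    rw [hf]; push_cast; ring
  have hcont : Continuous f := by
    rw [funext hf]; fun_prop
  rw [intervalIntegral.integral_eq_sub_of_hasDerivAt (fun t _ => hF t)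
    (hcont.intervalIntegrable u v)]
  ring

def fanSlice (t : ℝ) : Set ℝ := Icc |t - 1| (min (t + 1) 2)

lemma fanSlice_of_le_one {t : ℝ} (ht : t ≤ 1) : fanSlice t = Icc (1 - t) (t + 1) := by
  rw [fanSlice, abs_of_nonpos (by linarith), neg_sub, min_eq_left (by linarith)]

lemma fanSlice_of_one_le {t : ℝ} (ht : 1 ≤ t) : fanSlice t = Icc (t - 1) 2 := by
  rw [fanSlice, abs_of_nonneg (by linarith), min_eq_right (by linarith)]

lemma fanSlice_eq_empty_of_notMem {t : ℝ} (ht : t ∉ Icc 0 3) : fanSlice t = ∅ := by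
  rw [mem_Icc, not_and_or, not_le, not_le] at ht
  rcases ht with ht | ht
  · rw [fanSlice_of_le_one (by linarith)]; exact Icc_eq_empty (by linarith)
  · rw [fanSlice_of_one_le (by linarith)]; exact Icc_eq_empty (by linarith)

lemma fanSlice_subset (t : ℝ) : fanSlice t ⊆ Icc 0 2 :=
  Icc_subset_Icc (abs_nonneg _) (min_le_right _ _)

def fanRegion : Set (ℝ × ℝ × ℝ) := {q | q.2 ∈ fanSlice q.1 ×ˢ fanSlice q.1}

lemma isCompact_fanRegion : IsCompact fanRegion := by
  have hclosed : IsClosed fanRegion := by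
    simp only [fanRegion, fanSlice, mem_prod, mem_Icc, ofPred_and]
    refine ((isClosed_le ?_ ?_).inter (isClosed_le ?_ ?_)).inter
      ((isClosed_le ?_ ?_).inter (isClosed_le ?_ ?_)) <;> fun_prop
  refine (isCompact_Icc (a := ((0 : ℝ), 0, 0)) (b := (3, 2, 2))).of_isClosed_subset
    hclosed ?_
  rintro ⟨t, x, z⟩ ⟨hx, hz⟩
  have ht : t ∈ Icc (0 : ℝ) 3 := by
    by_contra ht
    rw [fanSlice_eq_empty_of_notMem ht] at hx
    exact hx
  obtain ⟨hx0, hx2⟩ := fanSlice_subset t hx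
  obtain ⟨hz0, hz2⟩ := fanSlice_subset t hz
  exact ⟨⟨ht.1, hx0, hz0⟩, ⟨ht.2, hx2, hz2⟩⟩

def fanCoords : (Fin 3 → ℝ) ≃ᵐ ℝ × ℝ × ℝ :=
  (MeasurableEquiv.piFinSuccAbove (fun _ : Fin 3 => ℝ) 1).trans
    ((MeasurableEquiv.refl ℝ).prodCongr MeasurableEquiv.finTwoArrow)

lemma fanCoords_apply (d : Fin 3 → ℝ) : fanCoords d = (d 1, d 0, d 2) := by
  simp [fanCoords, MeasurableEquiv.piFinSuccAbove, MeasurableEquiv.finTwoArrow,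
    MeasurableEquiv.prodCongr, MeasurableEquiv.trans, Fin.removeNth, Fin.succAbove]

lemma measurePreserving_fanCoords : MeasurePreserving fanCoords volume volume :=
  (volume_preserving_piFinSuccAbove (fun _ : Fin 3 => ℝ) 1).trans
    ((MeasurePreserving.id volume).prod (volume_preserving_finTwoArrow ℝ))

lemma hexagonPolytope_eq_preimage : hexagonPolytope = fanCoords ⁻¹' fanRegion := by
  ext d
  simp only [hexagonPolytope, fanRegion, fanSlice, mem_ofPred_eq, mem_preimage, fanCoords_apply,
    mem_prod, mem_Icc, abs_le, le_min_iff]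
  constructor
  · rintro ⟨h1, h2, h3, h4, ⟨h5, h6⟩, h7, ⟨h8, h9⟩, h10⟩
    refine ⟨⟨⟨?_, ?_⟩, ?_, ?_⟩, ⟨?_, ?_⟩, ?_, ?_⟩ <;> linarith
  · rintro ⟨⟨⟨h1, h2⟩, h3, h4⟩, ⟨h5, h6⟩, h7, h8⟩
    refine ⟨?_, ?_, ?_, ?_, ⟨?_, ?_⟩, ?_, ⟨?_, ?_⟩, ?_⟩ <;> linarith

lemma setIntegral_fanRegion_mul {f g : ℝ → ℝ} (hf : Continuous f) (hg : Continuous g) :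
    ∫ q in fanRegion, f q.1 * g q.2.1 =
      (∫ t in (0 : ℝ)..1, f t * (∫ x in (1 - t)..(t + 1), g x) * (2 * t)) +
        ∫ t in (1 : ℝ)..3, f t * (∫ x in (t - 1)..2, g x) * (3 - t) := by
  set h : ℝ → ℝ := fun t => ∫ p in fanSlice t ×ˢ fanSlice t, f t * g p.1
  have hslice (t : ℝ) :
      h t = f t * (∫ x in fanSlice t, g x) * volume.real (fanSlice t) := by
    have h_prod := setIntegral_prod_mul (μ := volume) (ν := volume) g (fun _ => (1 : ℝ))
      (fanSlice t) (fanSlice t)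
    simp only [mul_one, setIntegral_const, smul_eq_mul, ← Measure.volume_eq_prod] at h_prod
    rw [mul_assoc, ← h_prod, ← integral_const_mul]
  have hvanish (t : ℝ) (ht : t ∉ Icc 0 3) : h t = 0 := by
    simp only [h, fanSlice_eq_empty_of_notMem ht, empty_prod, Measure.restrict_empty,
      integral_zero_measure]
  have hint :
      IntegrableOn (fun q : ℝ × ℝ × ℝ => f q.1 * g q.2.1) fanRegion (volume.prod volume) :=
    (Continuous.continuousOn (by fun_prop)).integrableOn_compact isCompact_fanRegion
  have hmeas : MeasurableSet fanRegion := isCompact_fanRegion.isClosed.measurableSet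
  have h_int : Integrable h := integrable_setIntegral_slice hmeas hint
  rw [Measure.volume_eq_prod, setIntegral_prod_eq_integral_setIntegral_slice hmeas hint]
  change ∫ t, h t = _
  rw [← setIntegral_eq_integral_of_forall_compl_eq_zero hvanish, integral_Icc_eq_integral_Ioc,
    ← intervalIntegral.integral_of_le (by norm_num),
    ← intervalIntegral.integral_add_adjacent_intervals (b := 1) (h_int.intervalIntegrable)
      (h_int.intervalIntegrable)]
  congr 1 <;> refine intervalIntegral.integral_congr fun t ht => ?_
  · rw [uIcc_of_le zero_le_one] at ht
    rw [hslice, fanSlice_of_le_one ht.2, integral_Icc_eq_integral_Ioc,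
      ← intervalIntegral.integral_of_le (by linarith [ht.1]),
      Real.volume_real_Icc_of_le (by linarith [ht.1])]
    ring
  · rw [uIcc_of_le (by norm_num : (1 : ℝ) ≤ 3)] at ht
    rw [hslice, fanSlice_of_one_le ht.1, integral_Icc_eq_integral_Ioc,
      ← intervalIntegral.integral_of_le (by linarith [ht.2]),
      Real.volume_real_Icc_of_le (by linarith [ht.2])]
    ring

lemma setIntegral_hexagonPolytope_mul {f g : ℝ → ℝ} (hf : Continuous f) (hg : Continuous g) :
    ∫ d in hexagonPolytope, f (d 1) * g (d 0) =
      (∫ t in (0 : ℝ)..1, f t * (∫ x in (1 - t)..(t + 1), g x) * (2 * t)) +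
        ∫ t in (1 : ℝ)..3, f t * (∫ x in (t - 1)..2, g x) * (3 - t) := by
  rw [← setIntegral_fanRegion_mul hf hg, hexagonPolytope_eq_preimage,
    ← measurePreserving_fanCoords.setIntegral_preimage_emb fanCoords.measurableEmbedding]
  simp only [fanCoords_apply]

lemma measureReal_hexagonPolytope : volume.real hexagonPolytope = 4 := by
  have h := setIntegral_hexagonPolytope_mul (f := fun _ => 1) (g := fun _ => 1)
    continuous_const continuous_const
  simp only [mul_one, setIntegral_const, smul_eq_mul, intervalIntegral.integral_const] at h
  rw [h, integral_eq_cubic (a := 0) (b := 0) (c := 4) (d := 0) (fun t => by ring),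
    integral_eq_cubic (a := 9) (b := -6) (c := 1) (d := 0) (fun t => by ring)]
  norm_num

lemma setIntegral_hexagonPolytope_d0 : ∫ d in hexagonPolytope, d 0 = 14 / 3 := by
  have h := setIntegral_hexagonPolytope_mul (f := fun _ => 1) (g := id)
    continuous_const continuous_id
  simp only [one_mul, id, integral_id] at h
  rw [h, integral_eq_cubic (a := 0) (b := 0) (c := 4) (d := 0) (fun t => by ring),
    integral_eq_cubic (a := 9 / 2) (b := 3 / 2) (c := -5 / 2) (d := 1 / 2) (fun t => by ring)]
  norm_num

lemma setIntegral_hexagonPolytope_d1 : ∫ d in hexagonPolytope, d 1 = 5 := by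
  have h := setIntegral_hexagonPolytope_mul (f := id) (g := fun _ => 1)
    continuous_id continuous_const
  simp only [mul_one, id, intervalIntegral.integral_const, smul_eq_mul] at h
  rw [h, integral_eq_cubic (a := 0) (b := 0) (c := 0) (d := 4) (fun t => by ring),
    integral_eq_cubic (a := 0) (b := 9) (c := -6) (d := 1) (fun t => by ring)]
  norm_num

/-- With respect to the uniform measure on `P_6(1)`, the expected value of `d₁`
equals `7/6` and the expected value of `d₂` equals `5/4`. -/
theorem hexagon_expected_chords :
    (∫ d, d 0 ∂((MeasureTheory.volume hexagonPolytope)⁻¹ •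
        MeasureTheory.volume.restrict hexagonPolytope)) = 7 / 6 ∧
    (∫ d, d 1 ∂((MeasureTheory.volume hexagonPolytope)⁻¹ •
        MeasureTheory.volume.restrict hexagonPolytope)) = 5 / 4 := by
  have h_inv : (volume hexagonPolytope)⁻¹.toReal = 4⁻¹ := by
    rw [ENNReal.toReal_inv, ← measureReal_def, measureReal_hexagonPolytope]
  simp only [integral_smul_measure, h_inv, setIntegral_hexagonPolytope_d0,
    setIntegral_hexagonPolytope_d1, smul_eq_mul]
  norm_num
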